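/- For the Hopf vector field H on the unit sphere S³ ⊂ ℝ⁴, the volume integrand is identically 2: for every x ∈ S³ and every orthonormal basis {e₁,e₂,e₃} of T_xS³ = x^⊥, one has √(det(I₃ + G_H(x))) = 2, where G_H(x) is the Gram matrix with entries ⟨∇_{e_a}H, ∇_{e_b}H⟩. Consequently, for every compact K ⊆ S³ the volume of H on K equals vol_K(H) = 2·μ(K). -/

import Mathlib

open MeasureTheory Matrix
open scoped RealInnerProductSpace ENNReal

noncomputable section

/-- `ℝ⁴` with its Euclidean structure. -/
abbrev E4 : Type := EuclideanSpace ℝ (Fin 4)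

/-- The unit sphere `S³ ⊆ ℝ⁴`. -/
def S3 : Set E4 := {x : E4 | ‖x‖ = 1}

/-- The Riemannian volume on `S³`: the 3-dimensional Hausdorff measure on `ℝ⁴`. -/
def μS : Measure E4 := μH[3]

/-- The Hopf vector field `H(x₁,x₂,x₃,x₄) = (−x₂, x₁, −x₄, x₃)`. -/
def Hopf (x : E4) : E4 := (WithLp.equiv 2 (Fin 4 → ℝ)).symm ![-x 1, x 0, -x 3, x 2]

/-- The covariant derivative `∇_Y v = D_Y v − ⟨D_Y v, x⟩x` on the sphere, where `D` is the
(ambient) derivative of `v` at `x`. -/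
def cov (x : E4) (D : E4 →L[ℝ] E4) (Y : E4) : E4 := D Y - ⟪D Y, x⟫ • x

/-- `e : Fin 3 → E4` is an orthonormal basis of `T_x S³ = x^⊥` (any orthonormal family of
three vectors orthogonal to `x` spans `x^⊥`). -/
def TangentONB (x : E4) (e : Fin 3 → E4) : Prop :=
  Orthonormal ℝ e ∧ ∀ a, ⟪e a, x⟫ = 0

/-- The interior of `K` relative to the sphere `S³`. -/
def relInt (K : Set E4) : Set E4 :=
  {x ∈ K | ∃ V : Set E4, IsOpen V ∧ x ∈ V ∧ V ∩ S3 ⊆ K}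

/-- The boundary `∂K` of `K` relative to the sphere `S³`. -/
def relFrontier (K : Set E4) : Set E4 := closure K \ relInt K

/-- `K ⊆ S³` has smooth boundary: near each boundary point, `K` is a sublevel set of a smooth
function whose differential does not vanish on the tangent spaces of `S³` along the boundary. -/
def HasSmoothBoundary (K : Set E4) : Prop :=
  ∀ x ∈ relFrontier K, ∃ (V : Set E4) (f : E4 → ℝ), IsOpen V ∧ x ∈ V ∧
    ContDiffOn ℝ (⊤ : ℕ∞) f V ∧ (∀ y ∈ V ∩ S3, (y ∈ K ↔ f y ≤ 0)) ∧
    ∀ y ∈ V ∩ relFrontier K, ∃ Y : E4, ⟪Y, y⟫ = 0 ∧ fderiv ℝ f y Y ≠ 0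


section HopfAux

lemma inner_hopf_hopf (u v : E4) : ⟪Hopf u, Hopf v⟫ = ⟪u, v⟫ := by
  simp [Hopf, PiLp.inner_apply, Fin.sum_univ_four, RCLike.inner_apply]
  ring

lemma inner_hopf_left (u v : E4) : ⟪Hopf u, v⟫ = -⟪u, Hopf v⟫ := by
  simp [Hopf, PiLp.inner_apply, Fin.sum_univ_four, RCLike.inner_apply]
  ring

instance : Fact (Module.finrank ℝ E4 = 3 + 1) := ⟨by simp⟩

lemma sum_c_sq (x : E4) (hx : ‖x‖ = 1) (e : Fin 3 → E4) (he : TangentONB x e) :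
    ∑ a : Fin 3, ⟪Hopf (e a), x⟫ ^ 2 = 1 := by
  obtain ⟨hon, hperp⟩ := he
  set f : Fin 4 → E4 := Fin.cons x e with hf
  have hfon : Orthonormal ℝ f := by
    rw [orthonormal_iff_ite]
    intro i j
    refine Fin.cases ?_ ?_ i <;> [skip; intro a] <;> refine Fin.cases ?_ ?_ j
    · have hxx : ⟪x, x⟫ = 1 := by rw [real_inner_self_eq_norm_sq, hx]; norm_num
      simpa [f] using hxx
    · intro b; simpa [f, real_inner_comm x (e b), (Fin.succ_ne_zero b).symm] using hperp b
    · simpa [f] using hperp a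
    · intro b
      have := orthonormal_iff_ite.mp hon a b
      simpa [f, Fin.succ_injective, Fin.succ_inj] using this
  have hsp : ⊤ ≤ Submodule.span ℝ (Set.range f) := by
    have card : Fintype.card (Fin 4) = Module.finrank ℝ E4 := by simp
    have := (basisOfOrthonormalOfCardEqFinrank hfon card).span_eq
    rw [coe_basisOfOrthonormalOfCardEqFinrank] at this
    rw [this]
  set b : OrthonormalBasis (Fin 4) ℝ E4 := OrthonormalBasis.mk hfon hsp with hb
  have hbf : ∀ i, b i = f i := fun i => by rw [hb, OrthonormalBasis.coe_mk]
  set w : E4 := Hopf x with hw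
  have hpar : ∑ i : Fin 4, ⟪w, f i⟫ * ⟪f i, w⟫ = ⟪w, w⟫ := by
    have := b.sum_inner_mul_inner w w
    simpa [hbf] using this
  have hw0 : ⟪w, x⟫ = 0 := by
    simp [hw, Hopf, PiLp.inner_apply, Fin.sum_univ_four, RCLike.inner_apply]
    ring
  have hww : ⟪w, w⟫ = 1 := by
    rw [hw, inner_hopf_hopf, real_inner_self_eq_norm_sq, hx]; norm_num
  rw [Fin.sum_univ_succ] at hpar
  simp only [Fin.cons_zero, Fin.cons_succ, f] at hpar
  rw [hw0, hww] at hpar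
  have key : ∑ a : Fin 3, ⟪w, e a⟫ * ⟪e a, w⟫ = 1 := by linarith [hpar]
  calc ∑ a : Fin 3, ⟪Hopf (e a), x⟫ ^ 2
      = ∑ a : Fin 3, ⟪w, e a⟫ * ⟪e a, w⟫ := by
        refine Finset.sum_congr rfl fun a _ => ?_
        have h1 : ⟪Hopf (e a), x⟫ = -⟪e a, w⟫ := by rw [inner_hopf_left, hw]
        rw [h1, real_inner_comm w (e a)]; ring
    _ = 1 := key

lemma exists_tangentONB (x : E4) (hx : ‖x‖ = 1) : ∃ e : Fin 3 → E4, TangentONB x e := by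
  have hx0 : x ≠ 0 := by intro h; rw [h, norm_zero] at hx; norm_num at hx
  set b := OrthonormalBasis.fromOrthogonalSpanSingleton (𝕜 := ℝ) 3 hx0 with hb
  refine ⟨fun a => (b a : E4), ?_, ?_⟩
  · rw [orthonormal_iff_ite]
    intro i j
    have := orthonormal_iff_ite.mp b.orthonormal i j
    rwa [Submodule.coe_inner] at this
  · intro a
    have hmem := (b a).2
    have := (Submodule.mem_orthogonal _ _).mp hmem x (Submodule.mem_span_singleton_self x)
    rw [real_inner_comm] at this
    exact this

lemma integrand_eq_two (x : E4) (hx : x ∈ S3) (e : Fin 3 → E4) (he : TangentONB x e) :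
    Real.sqrt (Matrix.det (1 + Matrix.of fun a b : Fin 3 =>
      ⟪Hopf (e a) - ⟪Hopf (e a), x⟫ • x, Hopf (e b) - ⟪Hopf (e b), x⟫ • x⟫)) = 2 := by
  have hx' : ‖x‖ = 1 := hx
  obtain ⟨hon, hperp⟩ := he
  set c : Fin 3 → ℝ := fun a => ⟪Hopf (e a), x⟫ with hc
  have hxx : ⟪x, x⟫ = 1 := by rw [real_inner_self_eq_norm_sq, hx']; norm_num
  have hG : ∀ a b : Fin 3,
      ⟪Hopf (e a) - ⟪Hopf (e a), x⟫ • x, Hopf (e b) - ⟪Hopf (e b), x⟫ • x⟫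
        = (if a = b then 1 else 0) - c a * c b := by
    intro a b
    have hab : ⟪e a, e b⟫ = if a = b then 1 else 0 := orthonormal_iff_ite.mp hon a b
    have hxb : ⟪x, Hopf (e b)⟫ = c b := real_inner_comm _ _
    simp only [inner_sub_left, inner_sub_right, real_inner_smul_left, real_inner_smul_right,
      inner_hopf_hopf, hab, hxb, hxx, ← hc]
    ring
  have hsum : c 0 ^ 2 + c 1 ^ 2 + c 2 ^ 2 = 1 := by
    have := sum_c_sq x hx' e ⟨hon, hperp⟩
    rwa [Fin.sum_univ_three] at this
  have hdet : Matrix.det (1 + Matrix.of fun a b : Fin 3 =>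
      ⟪Hopf (e a) - ⟪Hopf (e a), x⟫ • x, Hopf (e b) - ⟪Hopf (e b), x⟫ • x⟫) = 4 := by
    rw [Matrix.det_fin_three]
    simp only [Matrix.add_apply, Matrix.one_apply, Matrix.of_apply, hG]
    norm_num [Fin.ext_iff]
    nlinarith [hsum]
  rw [hdet]
  rw [show (4 : ℝ) = 2 ^ 2 by norm_num, Real.sqrt_sq (by norm_num)]

end HopfAux

/-- For the Hopf field `H` the volume integrand is identically `2`:
`√(det(I₃ + G_H(x))) = 2` for every orthonormal tangent basis at every point of `S³` (here
`D_Y H = H(Y)` since `H` is linear). Consequently, `vol_K(H) = 2·μ(K)` for every compact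
`K ⊆ S³`, where the volume integrand `VFH` is characterized through arbitrary orthonormal
tangent bases. -/
theorem hopf_volume_integrand_and_volume :
    (∀ x ∈ S3, ∀ e : Fin 3 → E4, TangentONB x e →
      Real.sqrt (Matrix.det (1 + Matrix.of fun a b : Fin 3 =>
        ⟪Hopf (e a) - ⟪Hopf (e a), x⟫ • x, Hopf (e b) - ⟪Hopf (e b), x⟫ • x⟫)) = 2) ∧
    ∀ K : Set E4, IsCompact K → K ⊆ S3 → ∀ VFH : E4 → ℝ,
      (∀ x ∈ K, ∀ e : Fin 3 → E4, TangentONB x e →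
        VFH x = Real.sqrt (Matrix.det (1 + Matrix.of fun a b : Fin 3 =>
          ⟪Hopf (e a) - ⟪Hopf (e a), x⟫ • x, Hopf (e b) - ⟪Hopf (e b), x⟫ • x⟫))) →
      ∫ x in K, VFH x ∂μS = 2 * (μS K).toReal := by
  have part1 : ∀ x ∈ S3, ∀ e : Fin 3 → E4, TangentONB x e →
      Real.sqrt (Matrix.det (1 + Matrix.of fun a b : Fin 3 =>
        ⟪Hopf (e a) - ⟪Hopf (e a), x⟫ • x, Hopf (e b) - ⟪Hopf (e b), x⟫ • x⟫)) = 2 :=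
    fun x hx e he => integrand_eq_two x hx e he
  refine ⟨part1, ?_⟩
  intro K hK hKS VFH hVFH
  have hmeas : MeasurableSet K := hK.isClosed.measurableSet
  have heq : ∀ x ∈ K, VFH x = 2 := by
    intro x hx
    obtain ⟨e, he⟩ := exists_tangentONB x (hKS hx)
    rw [hVFH x hx e he, part1 x (hKS hx) e he]
  calc ∫ x in K, VFH x ∂μS = ∫ _x in K, (2 : ℝ) ∂μS :=
        setIntegral_congr_fun hmeas heq
    _ = (μS K).toReal • (2 : ℝ) := setIntegral_const 2
    _ = 2 * (μS K).toReal := by rw [smul_eq_mul, mul_comm]
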